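/- Let ad : End(V) → End(V) be the map ad(A) = i(E∘A − A∘E). Then for every integer k ≥ 1 the iterated commutators of X with iE close in the algebra spanned by {X, P, id}: ad^{2k−1}(X) = 4^{k−1}·P and ad^{2k}(X) = 4^{k−1}·(4X − 2·id). -/

import Mathlib

open Complex Finsupp

/-- The position operator `X` on the space of finitely supported complex sequences:
`X δ_l = (l+1) δ_l`. -/
noncomputable def Xop : (ℕ →₀ ℂ) →ₗ[ℂ] (ℕ →₀ ℂ) :=
  Finsupp.linearCombination ℂ fun l : ℕ => ((l : ℂ) + 1) • Finsupp.single l 1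

/-- The effective single-excitation Hamiltonian `E`:
`E δ_l = i (l+1) δ_{l+1} - i l δ_{l-1}` (the second term vanishing for `l = 0`). -/
noncomputable def Eop : (ℕ →₀ ℂ) →ₗ[ℂ] (ℕ →₀ ℂ) :=
  Finsupp.linearCombination ℂ fun l : ℕ =>
    (Complex.I * ((l : ℂ) + 1)) • Finsupp.single (l + 1) 1
      - (Complex.I * (l : ℂ)) • Finsupp.single (l - 1) 1

/-- The momentum-type operator `P`:
`P δ_l = (l+1) δ_{l+1} + l δ_{l-1}` (the second term vanishing for `l = 0`). -/
noncomputable def Pop : (ℕ →₀ ℂ) →ₗ[ℂ] (ℕ →₀ ℂ) :=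
  Finsupp.linearCombination ℂ fun l : ℕ =>
    ((l : ℂ) + 1) • Finsupp.single (l + 1) 1 + (l : ℂ) • Finsupp.single (l - 1) 1


/-- The generator of Heisenberg-picture time evolution: `ad A = i (E ∘ A - A ∘ E)`. -/
noncomputable def adE :
    ((ℕ →₀ ℂ) →ₗ[ℂ] (ℕ →₀ ℂ)) → ((ℕ →₀ ℂ) →ₗ[ℂ] (ℕ →₀ ℂ)) :=
  fun A => Complex.I • (Eop ∘ₗ A - A ∘ₗ Eop)


/-! On the basis, `ad X = P` and `ad P = 4X - 2`; since `ad` is linear and kills the identity,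
`ad² P = 4P`. Hence `ad^(2m+1) X = ad^(2m) P = 4^m P`, and one more `ad` gives `4^m (4X - 2)`. -/

theorem Function.iterate_apply_of_apply_eq_smul {R M : Type*} [Monoid R] [MulAction R M]
    {g : M → M} {c : R} (hg : ∀ m, g (c • m) = c • g m) {y : M} (hy : g y = c • y) (k : ℕ) :
    g^[k] y = c ^ k • y := by
  induction k with
  | zero => simp
  | succ k ih =>
    have hcomm : Function.Commute g^[k] (c • ·) := Function.Commute.iterate_left hg k
    rw [Function.iterate_succ_apply, hy, hcomm y, ih, pow_succ', mul_smul]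

lemma Xop_single (l : ℕ) : Xop (single l 1) = ((l : ℂ) + 1) • single l 1 := by
  simp [Xop]

lemma Eop_single (l : ℕ) :
    Eop (single l 1) =
      (I * ((l : ℂ) + 1)) • single (l + 1) 1 - (I * (l : ℂ)) • single (l - 1) 1 := by
  simp [Eop]

lemma Pop_single (l : ℕ) :
    Pop (single l 1) = ((l : ℂ) + 1) • single (l + 1) 1 + (l : ℂ) • single (l - 1) 1 := by
  simp [Pop]

lemma adE_smul (c : ℂ) (A : (ℕ →₀ ℂ) →ₗ[ℂ] ℕ →₀ ℂ) : adE (c • A) = c • adE A := by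
  simp only [adE, LinearMap.comp_smul, LinearMap.smul_comp]
  module

lemma adE_sub (A B : (ℕ →₀ ℂ) →ₗ[ℂ] ℕ →₀ ℂ) : adE (A - B) = adE A - adE B := by
  simp only [adE, LinearMap.comp_sub, LinearMap.sub_comp]
  module

lemma adE_id : adE LinearMap.id = 0 := by
  simp only [adE, LinearMap.comp_id, LinearMap.id_comp]
  module

lemma adE_Xop : adE Xop = Pop := by
  refine Finsupp.basisSingleOne.ext fun l => ?_
  -- `l - 1` is truncated subtraction, so `δ_0` is checked separately
  rcases l with _ | l
  all_goals
    simp only [adE, coe_basisSingleOne, LinearMap.smul_apply, LinearMap.sub_apply,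
      LinearMap.comp_apply, map_smul, map_sub, Xop_single, Eop_single, Pop_single,
      Nat.add_sub_cancel]
    push_cast
    match_scalars <;> grind [I_sq]

lemma adE_Pop : adE Pop = (4 : ℂ) • Xop - (2 : ℂ) • LinearMap.id := by
  refine Finsupp.basisSingleOne.ext fun l => ?_
  rcases l with _ | l
  all_goals
    simp only [adE, coe_basisSingleOne, LinearMap.smul_apply, LinearMap.sub_apply,
      LinearMap.comp_apply, LinearMap.id_apply, map_smul, map_sub, map_add, Xop_single,
      Eop_single, Pop_single, Nat.add_sub_cancel]
    push_cast
    match_scalars <;> grind [I_sq]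

lemma adE_four_smul_Xop_sub : adE ((4 : ℂ) • Xop - (2 : ℂ) • LinearMap.id) = (4 : ℂ) • Pop := by
  rw [adE_sub, adE_smul, adE_smul, adE_Xop, adE_id]
  module

lemma adE_iterate_two_Pop : adE^[2] Pop = (4 : ℂ) • Pop := by
  rw [Function.iterate_succ_apply', Function.iterate_one, adE_Pop, adE_four_smul_Xop_sub]

/-- The iterated commutators of `X` with `iE` close in the span of `{X, P, id}`:
`ad^(2k-1)(X) = 4^(k-1) P` and `ad^(2k)(X) = 4^(k-1) (4X - 2 id)` for all `k ≥ 1`. -/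
theorem iterated_commutators_closed (k : ℕ) (hk : 1 ≤ k) :
    adE^[2 * k - 1] Xop = (4 : ℂ) ^ (k - 1) • Pop ∧
    adE^[2 * k] Xop =
      (4 : ℂ) ^ (k - 1) • ((4 : ℂ) • Xop - (2 : ℂ) • LinearMap.id) := by
  obtain ⟨m, rfl⟩ : ∃ m, k = m + 1 := ⟨k - 1, by omega⟩
  have hsmul : ∀ A, adE^[2] ((4 : ℂ) • A) = (4 : ℂ) • adE^[2] A := fun A => by
    simp only [Function.iterate_succ, Function.iterate_zero, Function.comp_apply, id, adE_smul]
  have hodd : adE^[2 * m + 1] Xop = (4 : ℂ) ^ m • Pop := by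
    rw [Function.iterate_add_apply, Function.iterate_mul, Function.iterate_one, adE_Xop]
    exact Function.iterate_apply_of_apply_eq_smul hsmul adE_iterate_two_Pop m
  rw [show 2 * (m + 1) - 1 = 2 * m + 1 by omega, show 2 * (m + 1) = 2 * m + 1 + 1 by omega,
    Nat.add_sub_cancel]
  refine ⟨hodd, ?_⟩
  rw [Function.iterate_succ_apply', hodd, adE_smul, adE_Pop]
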